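/- Let G = G(M_{-1},M_0,M_{+1}) be a static graph with n nodes and let G_ℕ be the induced ℕ-periodic graph. Then G_ℕ contains an ∞-weight path if and only if G contains either (a) a circuit with length at most n, positive weight, and zero shift, or (b) a path p = q_1 p' q_2 where len(p') < n, len(q_1) ≤ n, len(q_2) ≤ n, and q_1, q_2 are circuits with shifts s_1, s_2 and weights w_1, w_2 respectively, satisfying s_1 > 0, s_2 < 0, and −s_2·w_1 + s_1·w_2 > 0. -/

import Mathlib

namespace Periodic

/-- An arc of a static graph: a source node, a target node, and a shift. -/
structure Arc (n : ℕ) where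
  src : Fin n
  tgt : Fin n
  shift : ℤ
deriving DecidableEq

/-- A static graph on `n` nodes, given by three matrices with entries in `ℚ ∪ {-∞}`. -/
structure StaticGraph (n : ℕ) where
  Mneg : Matrix (Fin n) (Fin n) (WithBot ℚ)
  Mzero : Matrix (Fin n) (Fin n) (WithBot ℚ)
  Mpos : Matrix (Fin n) (Fin n) (WithBot ℚ)

/-- The matrix associated to shift `s` (the all `-∞` matrix if `s ∉ {-1,0,1}`). -/
def StaticGraph.M {n : ℕ} (G : StaticGraph n) (s : ℤ) : Matrix (Fin n) (Fin n) (WithBot ℚ) :=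
  if s = -1 then G.Mneg else if s = 0 then G.Mzero else if s = 1 then G.Mpos
  else Matrix.of fun _ _ => ⊥

/-- `e` is an arc of `G` iff the corresponding matrix entry is not `-∞`. -/
def StaticGraph.IsArc {n : ℕ} (G : StaticGraph n) (e : Arc n) : Prop :=
  G.M e.shift e.tgt e.src ≠ ⊥

/-- The (rational) weight of an arc. -/
def StaticGraph.w {n : ℕ} (G : StaticGraph n) (e : Arc n) : ℚ :=
  (G.M e.shift e.tgt e.src).unbotD 0

/-- A path in the static graph `G`: a first node together with a compatible list of arcs. -/
structure SPath {n : ℕ} (G : StaticGraph n) where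
  first : Fin n
  arcs : List (Arc n)
  valid : ∀ e ∈ arcs, G.IsArc e
  startOk : ∀ e ∈ arcs.head?, e.src = first
  chainOk : arcs.Chain' (fun e f => e.tgt = f.src)

namespace SPath

variable {n : ℕ} {G : StaticGraph n}

/-- The last node of a path. -/
def last (p : SPath G) : Fin n := (p.arcs.getLast?).elim p.first Arc.tgt

/-- The length of a path. -/
def len (p : SPath G) : ℕ := p.arcs.length

/-- The shift of a path. -/
def shift (p : SPath G) : ℤ := (p.arcs.map Arc.shift).sum

/-- The weight of a path. -/
def weight (p : SPath G) : ℚ := (p.arcs.map G.w).sum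

/-- The sum of the shifts of the first `i` arcs of a path. -/
def prefixShift (p : SPath G) (i : ℕ) : ℤ := ((p.arcs.take i).map Arc.shift).sum

/-- The left-shift of a path: the minimum of all prefix sums of arc shifts. -/
def lshift (p : SPath G) : ℤ :=
  Finset.univ.inf' Finset.univ_nonempty
    (fun i : Fin (p.arcs.length + 1) => p.prefixShift i)

/-- A path is a circuit if its first and last nodes coincide. -/
def IsCircuit (p : SPath G) : Prop := p.first = p.last

/-- The sequence of nodes visited by a path. -/
def nodes (p : SPath G) : List (Fin n) := p.first :: p.arcs.map Arc.tgt

/-- An elementary circuit: a nonempty circuit whose nodes, except the last one,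
are pairwise distinct. -/
def IsElemCircuit (p : SPath G) : Prop :=
  p.IsCircuit ∧ p.arcs ≠ [] ∧ p.nodes.dropLast.Nodup

/-- Concatenation of two paths with matching endpoints. -/
def append (p q : SPath G) (h : q.first = p.last) : SPath G where
  first := p.first
  arcs := p.arcs ++ q.arcs
  valid := by
    intro e he
    rcases List.mem_append.mp he with h' | h'
    · exact p.valid e h'
    · exact q.valid e h'
  startOk := by
    intro e he
    cases hp : p.arcs with
    | nil =>
      rw [hp] at he
      simp only [List.nil_append] at he
      rw [q.startOk e he, h]
      simp [SPath.last, hp]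
    | cons a l =>
      rw [hp] at he
      simp only [List.cons_append, List.head?_cons, Option.mem_def, Option.some.injEq] at he
      subst he
      exact p.startOk a (by rw [hp]; rfl)
  chainOk := by
    apply List.IsChain.append p.chainOk q.chainOk
    intro x hx y hy
    have h1 : y.src = q.first := q.startOk y hy
    have hx' : p.arcs.getLast? = some x := hx
    have h2 : p.last = x.tgt := by simp [SPath.last, hx']
    show x.tgt = y.src
    rw [h1, h, h2]

theorem last_append (p q : SPath G) (h : q.first = p.last) :
    (p.append q h).last = q.last := by
  cases hq : q.arcs with
  | nil =>
    have hql : q.last = q.first := by simp [SPath.last, hq]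
    simp [SPath.append, SPath.last, hq, hql, h]
  | cons a l =>
    have hx : (a :: l).getLast? = some ((a :: l).getLast (by simp)) :=
      List.getLast?_eq_some_getLast (by simp)
    simp [SPath.append, SPath.last, hq, List.getLast?_append, hx]

/-- The empty path at node `i`. -/
def nil (G : StaticGraph n) (i : Fin n) : SPath G :=
  ⟨i, [], by simp, by simp, List.isChain_nil⟩

/-- Auxiliary construction for powers of a circuit. -/
def npowAux (q : SPath G) (h : q.IsCircuit) :
    (x : ℕ) → {r : SPath G // r.first = q.first ∧ r.last = q.first}
  | 0 => ⟨SPath.nil G q.first, rfl, by simp [SPath.last, SPath.nil]⟩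
  | x + 1 =>
    let r := npowAux q h x
    ⟨q.append r.1 (r.2.1.trans h), rfl, (last_append q r.1 _).trans r.2.2⟩

/-- The `x`-fold concatenation `q^x` of a circuit `q` with itself. -/
def npow (q : SPath G) (h : q.IsCircuit) (x : ℕ) : SPath G := (npowAux q h x).1

theorem npow_first (q : SPath G) (h : q.IsCircuit) (x : ℕ) :
    (npow q h x).first = q.first := (npowAux q h x).2.1

theorem npow_last (q : SPath G) (h : q.IsCircuit) (x : ℕ) :
    (npow q h x).last = q.first := (npowAux q h x).2.2

/-- Concatenation of a nonempty list of paths with matching endpoints. -/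
def concatChain (p : SPath G) :
    (l : List (SPath G)) → (p :: l).Chain' (fun a b => b.first = a.last) →
      {r : SPath G // r.first = p.first}
  | [], _ => ⟨p, rfl⟩
  | q :: l, h =>
    let rest := concatChain q l (List.isChain_cons_cons.mp h).2
    ⟨p.append rest.1 (rest.2.trans (List.isChain_cons_cons.mp h).1), rfl⟩

/-- The path `p`, started at shift `k`, visits only shifts belonging to `S`;
i.e., `(p, k)` represents a path of the `S`-periodic graph `G_S`. -/
def shiftsIn (p : SPath G) (k : ℤ) (S : Set ℤ) : Prop :=
  ∀ i ≤ p.arcs.length, k + p.prefixShift i ∈ S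

end SPath

/-- The set of positive integers (the paper's `ℕ`). -/
def Spos : Set ℤ := {k | 0 < k}

/-- The set of integers `k` with `-n ≤ k ≤ n`. -/
def Sint (n : ℕ) : Set ℤ := {k | -(n : ℤ) ≤ k ∧ k ≤ (n : ℤ)}

/-- The `S`-periodic graph `G_S` contains an `∞`-weight path: there are nodes `u, v` of `G_S`
and an infinite sequence of paths of `G_S` from `u` to `v` with strictly increasing weights. -/
def HasInfWeightPath {n : ℕ} (G : StaticGraph n) (S : Set ℤ) : Prop :=
  ∃ u v : Fin n × ℤ, ∃ (p : ℕ → SPath G) (k : ℕ → ℤ),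
    (∀ h, (p h).shiftsIn (k h) S) ∧
    (∀ h, ((p h).first, k h) = u ∧ ((p h).last, k h + (p h).shift) = v) ∧
    ∀ h, (p h).weight < (p (h + 1)).weight

/-- The `S`-periodic graph `G_S` contains a circuit with positive weight. -/
def HasPosWeightCircuit {n : ℕ} (G : StaticGraph n) (S : Set ℤ) : Prop :=
  ∃ (p : SPath G) (k : ℤ), p.shiftsIn k S ∧ p.IsCircuit ∧ p.shift = 0 ∧ 0 < p.weight

end Periodic

namespace Periodic

variable {n : ℕ} {G : StaticGraph n}

/-- The inner nodes of a path: all visited nodes except the first and the last one. -/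
def SPath.innerNodes (p : SPath G) : List (Fin n) := (p.nodes.drop 1).dropLast

/-- `p` splits as the concatenation `u q v`. -/
def Splits (p u q v : SPath G) : Prop :=
  p.first = u.first ∧ p.arcs = u.arcs ++ (q.arcs ++ v.arcs) ∧
    q.first = u.last ∧ v.first = q.last

/-- The elementary circuit `q` can be cut out of `p = u q v`: all of its inner nodes
occur somewhere else in the remaining path `u v`. -/
def Removable (p u q v : SPath G) : Prop :=
  Splits p u q v ∧ q.IsElemCircuit ∧
    ∀ x ∈ q.innerNodes, x ∈ u.nodes ∨ x ∈ v.nodes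

/-- One step of the decomposition: cut the removable elementary circuit `q` out of `p`,
obtaining `p₂`. -/
def CutStep (p p₂ q : SPath G) : Prop :=
  ∃ u v, Removable p u q v ∧ p₂.first = u.first ∧ p₂.arcs = u.arcs ++ v.arcs

/-- `IsCPD p p' Q` : `(p', Q)` is a complete path decomposition of `p`, where the
multiset `Q` records the removed elementary circuits with their multiplicities. -/
inductive IsCPD : SPath G → SPath G → Multiset (SPath G) → Prop
  | done (p : SPath G) (h : ∀ u q v, ¬ Removable p u q v) : IsCPD p p 0
  | step (p p₂ p' q : SPath G) (Q : Multiset (SPath G)) :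
      CutStep p p₂ q → IsCPD p₂ p' Q → IsCPD p p' (q ::ₘ Q)

/-- Assumption A: all circuits of the decomposition have nonzero shift, and no two distinct
circuits have both the same source node and the same shift. -/
def AssumptionA (Q : Multiset (SPath G)) : Prop :=
  (∀ q ∈ Q, q.shift ≠ 0) ∧
    ∀ q ∈ Q, ∀ r ∈ Q, q ≠ r → (q.first, q.shift) ≠ (r.first, r.shift)

/-- `ps` is a factorization of the path `p` into consecutive subpaths. -/
def IsFactorization (p : SPath G) (ps : List (SPath G)) : Prop :=
  ps ≠ [] ∧ ps.Chain' (fun a b => b.first = a.last) ∧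
    (∀ q ∈ ps.head?, q.first = p.first) ∧ p.arcs = (ps.map SPath.arcs).flatten

/-- One move of the canonical-path-composition algorithm: a factor which is a circuit with
negative shift is postponed, or a factor which is a circuit with positive shift is
anticipated. -/
inductive MoveStep : List (SPath G) → List (SPath G) → Prop
  | postpone (a b d : List (SPath G)) (c : SPath G) (hc : c.IsCircuit) (hs : c.shift < 0) :
      MoveStep (a ++ c :: (b ++ d)) (a ++ (b ++ c :: d))
  | anticipate (a b d : List (SPath G)) (c : SPath G) (hc : c.IsCircuit) (hs : 0 < c.shift) :
      MoveStep (a ++ (b ++ c :: d)) (a ++ c :: (b ++ d))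

/-- Weights of pseudo-circuits of `G_S` from node `(i, 0)` to node `(i, s)`. -/
def PCWeights (G : StaticGraph n) (S : Set ℤ) (i : Fin n) (s : ℤ) : Set ℚ :=
  {w | ∃ p : SPath G, p.shiftsIn 0 S ∧ p.first = i ∧ p.last = i ∧ p.shift = s ∧ p.weight = w}

/-- The path `r^{(h)} = q₁^{(-s₂)·h} p' q₂^{s₁·h}`. -/
def rpath (q₁ p' q₂ : SPath G)
    (hc₁ : q₁.IsCircuit) (hc₂ : q₂.IsCircuit)
    (h₁ : p'.first = q₁.last) (h₂ : q₂.first = p'.last) (h : ℕ) : SPath G :=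
  (SPath.npow q₁ hc₁ ((-q₂.shift).toNat * h)).append
    (p'.append (SPath.npow q₂ hc₂ (q₁.shift.toNat * h))
      ((SPath.npow_first q₂ hc₂ _).trans h₂))
    ((h₁.trans hc₁.symm).trans (SPath.npow_last q₁ hc₁ _).symm)

/-- `x` is a nonzero solution in `S` which is minimal (componentwise) and has minimal
carrier among nonzero solutions. -/
def isMinSol {ι : Type*} (S : Set (ι → ℕ)) (x : ι → ℕ) : Prop :=
  x ∈ S ∧ x ≠ 0 ∧
    ∀ y ∈ S, y ≠ x → y ≠ 0 → ¬ y ≤ x ∧ ¬ ({i | y i ≠ 0} ⊂ {i | x i ≠ 0})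

/-- Solutions `(y, z) ∈ ℕ₀^m × ℕ₀^(m-1)` of the Diophantine system
`z_l = ∑_{j ≤ l} s_j y_j` (for `l ∈ [1, m-1]`) and `∑_j s_j y_j = 0`. -/
def DioSol (m : ℕ) (s : Fin m → ℤ) : Set (Fin m ⊕ Fin (m - 1) → ℕ) :=
  {x | (∀ l : Fin (m - 1), (x (Sum.inr l) : ℤ) =
          ∑ j ∈ Finset.univ.filter (fun j : Fin m => (j : ℕ) ≤ (l : ℕ)),
            s j * (x (Sum.inl j) : ℤ)) ∧
       (∑ j : Fin m, s j * (x (Sum.inl j) : ℤ)) = 0}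

/-- The candidate minimal solution `x^{(i,j)}`: `y_i = -s_j/g`, `y_j = s_i/g`,
`z_l = s_i·(-s_j)/g` for `l ∈ [i, j-1]`, all other entries `0`, where `g = gcd(s_i, -s_j)`. -/
def dioMinVec (m : ℕ) (s : Fin m → ℤ) (i j : Fin m) : Fin m ⊕ Fin (m - 1) → ℕ :=
  fun l => match l with
  | Sum.inl a =>
      if a = i then (s j).natAbs / Int.gcd (s i) (s j)
      else if a = j then (s i).natAbs / Int.gcd (s i) (s j)
      else 0
  | Sum.inr a =>
      if (i : ℕ) ≤ (a : ℕ) ∧ (a : ℕ) < (j : ℕ)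
      then (s i).natAbs * ((s j).natAbs / Int.gcd (s i) (s j))
      else 0

end Periodic

open Periodic Periodic.SPath

namespace Periodic

variable {n : ℕ} {G : StaticGraph n}

/-! ### Walks: a relational presentation of paths -/

inductive Walk (G : StaticGraph n) : Fin n → List (Arc n) → Fin n → Prop
  | nil (x : Fin n) : Walk G x [] x
  | cons {x y : Fin n} {e : Arc n} {l : List (Arc n)} (hsrc : e.src = x)
      (harc : G.IsArc e) (h : Walk G e.tgt l y) : Walk G x (e :: l) y

theorem Walk.append {x y z : Fin n} {l₁ l₂ : List (Arc n)}
    (h₁ : Walk G x l₁ y) (h₂ : Walk G y l₂ z) : Walk G x (l₁ ++ l₂) z := by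
  induction h₁ with
  | nil => exact h₂
  | cons hsrc harc h ih => exact .cons hsrc harc (ih h₂)

theorem Walk.split {x z : Fin n} {l₁ l₂ : List (Arc n)}
    (h : Walk G x (l₁ ++ l₂) z) : ∃ y, Walk G x l₁ y ∧ Walk G y l₂ z := by
  induction l₁ generalizing x with
  | nil => exact ⟨x, .nil x, h⟩
  | cons e l₁ ih =>
    cases h with
    | cons hsrc harc h =>
      obtain ⟨y, hy₁, hy₂⟩ := ih h
      exact ⟨y, .cons hsrc harc hy₁, hy₂⟩

theorem Walk.valid {x y : Fin n} {l : List (Arc n)} (h : Walk G x l y) :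
    ∀ e ∈ l, G.IsArc e := by
  induction h with
  | nil => simp
  | cons hsrc harc h ih =>
    intro f hf
    rcases List.mem_cons.mp hf with rfl | hf
    · exact harc
    · exact ih f hf

theorem Walk.startOk {x y : Fin n} {l : List (Arc n)} (h : Walk G x l y) :
    ∀ e ∈ l.head?, e.src = x := by
  cases h with
  | nil => simp
  | cons hsrc harc h => simpa using hsrc

theorem Walk.chainOk {x y : Fin n} {l : List (Arc n)} (h : Walk G x l y) :
    l.Chain' (fun e f => e.tgt = f.src) := by
  induction h with
  | nil => exact List.isChain_nil
  | cons hsrc harc h ih =>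
    refine List.isChain_cons.mpr ⟨?_, ih⟩
    intro f hf
    exact (h.startOk f hf).symm

theorem Walk.lastOk {x y : Fin n} {l : List (Arc n)} (h : Walk G x l y) :
    (l.getLast?).elim x Arc.tgt = y := by
  induction h with
  | nil => rfl
  | @cons x' y' e l hsrc harc h ih =>
    cases l with
    | nil => cases h; rfl
    | cons f l' =>
      rw [List.getLast?_eq_getLast (l := f :: l') (by simp)] at ih
      rw [List.getLast?_cons_cons, List.getLast?_eq_getLast (l := f :: l') (by simp)]
      exact ih

/-- Build an `SPath` from a walk. -/
noncomputable def Walk.toSPath {x y : Fin n} {l : List (Arc n)} (h : Walk G x l y) : SPath G :=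
  ⟨x, l, h.valid, h.startOk, h.chainOk⟩

@[simp] theorem Walk.toSPath_first {x y : Fin n} {l : List (Arc n)} (h : Walk G x l y) :
    h.toSPath.first = x := rfl

@[simp] theorem Walk.toSPath_arcs {x y : Fin n} {l : List (Arc n)} (h : Walk G x l y) :
    h.toSPath.arcs = l := rfl

theorem Walk.toSPath_last {x y : Fin n} {l : List (Arc n)} (h : Walk G x l y) :
    h.toSPath.last = y := h.lastOk

theorem SPath.walk (p : SPath G) : Walk G p.first p.arcs p.last := by
  suffices H : ∀ (l : List (Arc n)) (x : Fin n), (∀ e ∈ l, G.IsArc e) →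
      (∀ e ∈ l.head?, e.src = x) → l.Chain' (fun e f => e.tgt = f.src) →
      Walk G x l ((l.getLast?).elim x Arc.tgt) by
    exact H p.arcs p.first p.valid p.startOk p.chainOk
  intro l
  induction l with
  | nil => intro x _ _ _; exact .nil x
  | cons e l ih =>
    intro x hv hs hc
    have hsrc : e.src = x := hs e rfl
    have harc : G.IsArc e := hv e (List.mem_cons_self)
    cases l with
    | nil => exact .cons hsrc harc (.nil _)
    | cons f l' =>
      have hw := ih e.tgt (fun g hg => hv g (List.mem_cons_of_mem _ hg))
        (by
          intro g hg
          simp only [List.head?_cons, Option.mem_def, Option.some.injEq] at hg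
          subst hg
          exact ((List.isChain_cons_cons.mp hc).1).symm)
        (List.isChain_cons_cons.mp hc).2
      rw [List.getLast?_cons_cons]
      exact .cons hsrc harc hw

/-! ### Sums over arc lists -/

def ssum (l : List (Arc n)) : ℤ := (l.map Arc.shift).sum

def wsum (G : StaticGraph n) (l : List (Arc n)) : ℚ := (l.map G.w).sum

@[simp] theorem ssum_nil : ssum ([] : List (Arc n)) = 0 := rfl
@[simp] theorem wsum_nil : wsum G [] = 0 := rfl

@[simp] theorem ssum_cons (e : Arc n) (l : List (Arc n)) :
    ssum (e :: l) = e.shift + ssum l := by simp [ssum]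

@[simp] theorem wsum_cons (e : Arc n) (l : List (Arc n)) :
    wsum G (e :: l) = G.w e + wsum G l := by simp [wsum]

@[simp] theorem ssum_append (l₁ l₂ : List (Arc n)) :
    ssum (l₁ ++ l₂) = ssum l₁ + ssum l₂ := by simp [ssum]

@[simp] theorem wsum_append (l₁ l₂ : List (Arc n)) :
    wsum G (l₁ ++ l₂) = wsum G l₁ + wsum G l₂ := by simp [wsum]

theorem SPath.shift_eq (p : SPath G) : p.shift = ssum p.arcs := rfl
theorem SPath.weight_eq (p : SPath G) : p.weight = wsum G p.arcs := rfl

/-! ### Minimal prefix shift -/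

def lmin : List (Arc n) → ℤ
  | [] => 0
  | e :: l => min 0 (e.shift + lmin l)

theorem lmin_nonpos (l : List (Arc n)) : lmin l ≤ 0 := by
  cases l with
  | nil => simp [lmin]
  | cons e l => simp [lmin]

theorem lmin_append (l₁ l₂ : List (Arc n)) :
    lmin (l₁ ++ l₂) = min (lmin l₁) (ssum l₁ + lmin l₂) := by
  induction l₁ with
  | nil =>
    have := lmin_nonpos l₂
    simp only [List.nil_append, lmin, ssum_nil, zero_add]
    omega
  | cons e l₁ ih =>
    simp only [List.cons_append, lmin, List.append_eq, ssum_cons] at *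
    rw [ih]
    omega

/-- All prefix shifts of `l`, started at `k`, are positive. -/
def PosL (k : ℤ) (l : List (Arc n)) : Prop :=
  ∀ i ≤ l.length, 0 < k + ((l.take i).map Arc.shift).sum

theorem posL_cons (k : ℤ) (e : Arc n) (l : List (Arc n)) :
    PosL k (e :: l) ↔ 0 < k ∧ PosL (k + e.shift) l := by
  constructor
  · intro h
    refine ⟨by simpa [PosL] using h 0 (by simp), ?_⟩
    intro i hi
    have := h (i + 1) (by simpa using hi)
    simpa [List.take_succ_cons, add_assoc] using this
  · rintro ⟨h0, h⟩ i hi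
    cases i with
    | zero => simpa using h0
    | succ i =>
      have := h i (by simpa using hi)
      simpa [List.take_succ_cons, add_assoc] using this

theorem posL_iff (k : ℤ) (l : List (Arc n)) : PosL k l ↔ 0 < k + lmin l := by
  induction l generalizing k with
  | nil =>
    constructor
    · intro h; simpa [lmin] using h 0 (by simp)
    · intro h i hi
      simp only [List.length_nil, Nat.le_zero] at hi
      subst hi
      simpa [lmin] using h
  | cons e l ih =>
    rw [posL_cons, ih]
    simp only [lmin]
    omega

theorem shiftsIn_iff (p : SPath G) (k : ℤ) : p.shiftsIn k Spos ↔ PosL k p.arcs := by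
  constructor
  · intro h i hi
    have := h i hi
    simpa [Spos, SPath.prefixShift, Set.mem_setOf_eq, add_comm] using this
  · intro h i hi
    have := h i hi
    simpa [Spos, SPath.prefixShift, Set.mem_setOf_eq, add_comm] using this

/-! ### Powers of circuits -/

theorem npow_arcs_zero (q : SPath G) (hc : q.IsCircuit) :
    (SPath.npow q hc 0).arcs = [] := rfl

theorem npow_arcs_succ (q : SPath G) (hc : q.IsCircuit) (x : ℕ) :
    (SPath.npow q hc (x + 1)).arcs = q.arcs ++ (SPath.npow q hc x).arcs := rfl

theorem npow_ssum (q : SPath G) (hc : q.IsCircuit) (x : ℕ) :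
    ssum (SPath.npow q hc x).arcs = x * ssum q.arcs := by
  induction x with
  | zero => simp [npow_arcs_zero]
  | succ x ih => rw [npow_arcs_succ, ssum_append, ih]; push_cast; ring

theorem npow_wsum (q : SPath G) (hc : q.IsCircuit) (x : ℕ) :
    wsum G (SPath.npow q hc x).arcs = x * wsum G q.arcs := by
  induction x with
  | zero => simp [npow_arcs_zero]
  | succ x ih => rw [npow_arcs_succ, wsum_append, ih]; push_cast; ring

theorem lmin_npow_of_nonneg (q : SPath G) (hc : q.IsCircuit) (hs : 0 ≤ ssum q.arcs) (x : ℕ) :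
    lmin q.arcs ≤ lmin (SPath.npow q hc x).arcs := by
  induction x with
  | zero => rw [npow_arcs_zero]; exact lmin_nonpos _
  | succ x ih =>
    rw [npow_arcs_succ, lmin_append]
    omega

theorem lmin_npow_of_nonpos (q : SPath G) (hc : q.IsCircuit) (hs : ssum q.arcs ≤ 0) (x : ℕ) :
    (x : ℤ) * ssum q.arcs + lmin q.arcs ≤ lmin (SPath.npow q hc x).arcs := by
  induction x with
  | zero =>
    rw [npow_arcs_zero]
    have := lmin_nonpos q.arcs
    simp only [Nat.cast_zero, zero_mul, zero_add, lmin]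
    omega
  | succ x ih =>
    rw [npow_arcs_succ, lmin_append]
    have h1 : ((x : ℤ) + 1) * ssum q.arcs ≤ 0 :=
      mul_nonpos_of_nonneg_of_nonpos (by positivity) hs
    have := lmin_nonpos q.arcs
    have h2 : ((x : ℤ) + 1) * ssum q.arcs = ssum q.arcs + (x : ℤ) * ssum q.arcs := by ring
    push_cast
    omega


/-! ### Finiteness of arcs and short walks -/

theorem StaticGraph.IsArc.shift_cases {e : Arc n} (h : G.IsArc e) :
    e.shift = -1 ∨ e.shift = 0 ∨ e.shift = 1 := by
  by_contra hc
  push_neg at hc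
  exact h (by simp [StaticGraph.M, hc.1, hc.2.1, hc.2.2, Matrix.of_apply])

theorem finite_isArc (G : StaticGraph n) : {e : Arc n | G.IsArc e}.Finite := by
  have hsub : {e : Arc n | G.IsArc e} ⊆
      (fun t : (Fin n × Fin n) × ℤ => ⟨t.1.1, t.1.2, t.2⟩) ''
        ((Set.univ ×ˢ Set.univ) ×ˢ {-1, 0, 1}) := by
    intro e he
    refine ⟨((e.src, e.tgt), e.shift), ?_, rfl⟩
    refine ⟨⟨trivial, trivial⟩, ?_⟩
    simpa using he.shift_cases
  exact Set.Finite.subset (Set.Finite.image _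
    ((Set.finite_univ.prod Set.finite_univ).prod
      ((Set.finite_singleton _).insert _ |>.insert _))) hsub

theorem finite_walkLists (G : StaticGraph n) (m : ℕ) :
    {l : List (Arc n) | (∀ e ∈ l, G.IsArc e) ∧ l.length ≤ m}.Finite := by
  have hA : {e : Arc n | G.IsArc e}.Finite := finite_isArc G
  have : Finite {e : Arc n | G.IsArc e} := hA.to_subtype
  have hfin : {l : List {e : Arc n | G.IsArc e} | l.length ≤ m}.Finite :=
    List.finite_length_le _ m
  have hsub : {l : List (Arc n) | (∀ e ∈ l, G.IsArc e) ∧ l.length ≤ m} ⊆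
      (fun l : List {e : Arc n | G.IsArc e} => l.map Subtype.val) ''
        {l | l.length ≤ m} := by
    rintro l ⟨hv, hl⟩
    refine ⟨l.attach.map (fun e => ⟨e.1, hv e.1 e.2⟩), by simpa using hl, ?_⟩
    dsimp only
    rw [List.map_map]
    simp [Function.comp_def]
  exact Set.Finite.subset (hfin.image _) hsub

/-! ### The node potential `lam` -/

/-- Reachability in the static graph. -/
def Reach (G : StaticGraph n) (x y : Fin n) : Prop := ∃ l, Walk G x l y

theorem Reach.refl (x : Fin n) : Reach G x x := ⟨[], .nil x⟩

/-- Ratios of reachable short circuits with positive shift. -/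
def UpSet (G : StaticGraph n) (x : Fin n) : Set ℚ :=
  {c | ∃ z l, Walk G z l z ∧ l.length ≤ n ∧ 0 < ssum l ∧ Reach G z x ∧
    c = wsum G l / (ssum l : ℚ)}

/-- Ratios of short circuits with negative shift. -/
def DnSet (G : StaticGraph n) : Set ℚ :=
  {c | ∃ z l, Walk G z l z ∧ l.length ≤ n ∧ ssum l < 0 ∧ c = wsum G l / (ssum l : ℚ)}

theorem finite_UpSet (G : StaticGraph n) (x : Fin n) : (UpSet G x).Finite := by
  apply Set.Finite.subset ((finite_walkLists G n).image (fun l => wsum G l / (ssum l : ℚ)))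
  rintro c ⟨z, l, hw, hl, _, _, rfl⟩
  exact ⟨l, ⟨hw.valid, hl⟩, rfl⟩

theorem finite_DnSet (G : StaticGraph n) : (DnSet G).Finite := by
  apply Set.Finite.subset ((finite_walkLists G n).image (fun l => wsum G l / (ssum l : ℚ)))
  rintro c ⟨z, l, hw, hl, _, rfl⟩
  exact ⟨l, ⟨hw.valid, hl⟩, rfl⟩

noncomputable def m0 (G : StaticGraph n) : ℚ :=
  ((finite_DnSet G).insert 0).toFinset.min' ⟨0, by simp⟩

theorem m0_le {c : ℚ} (hc : c ∈ DnSet G) : m0 G ≤ c :=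
  Finset.min'_le _ c (by simp [Set.Finite.mem_toFinset, hc])

noncomputable def lam (G : StaticGraph n) (x : Fin n) : ℚ :=
  (((finite_UpSet G x).insert (m0 G)).toFinset).max' ⟨m0 G, by simp⟩

theorem le_lam_of_up {x : Fin n} {c : ℚ} (hc : c ∈ UpSet G x) : c ≤ lam G x :=
  Finset.le_max' _ c (by simp [Set.Finite.mem_toFinset, hc])

theorem m0_le_lam (G : StaticGraph n) (x : Fin n) : m0 G ≤ lam G x :=
  Finset.le_max' _ _ (by simp)

theorem lam_le {x : Fin n} {b : ℚ} (hm : m0 G ≤ b) (h : ∀ c ∈ UpSet G x, c ≤ b) :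
    lam G x ≤ b := by
  apply Finset.max'_le
  intro c hc
  rw [Set.Finite.mem_toFinset] at hc
  rcases hc with rfl | hc
  · exact hm
  · exact h c hc

theorem lam_mono_arc {e : Arc n} (he : G.IsArc e) : lam G e.src ≤ lam G e.tgt := by
  apply lam_le (m0_le_lam G e.tgt)
  rintro c ⟨z, l, hw, hl, hs, ⟨r, hr⟩, rfl⟩
  exact le_lam_of_up ⟨z, l, hw, hl, hs, ⟨r ++ [e], hr.append (.cons rfl he (.nil _))⟩, rfl⟩

theorem lam_mono_walk {x y : Fin n} {l : List (Arc n)} (h : Walk G x l y) :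
    lam G x ≤ lam G y := by
  induction h with
  | nil => exact le_refl _
  | cons hsrc harc h ih => exact le_trans (hsrc ▸ lam_mono_arc harc) ih

theorem lam_mono_reach {x y : Fin n} (h : Reach G x y) : lam G x ≤ lam G y := by
  obtain ⟨l, hl⟩ := h
  exact lam_mono_walk hl

/-! ### Extraction of short circuits from long walks -/

theorem pair_sublist_split {α : Type*} {a : α} :
    ∀ {N : List α}, List.Sublist [a, a] N → ∃ t₁ t₂ t₃, N = t₁ ++ a :: (t₂ ++ a :: t₃) := by
  intro N
  induction N with
  | nil => intro h; exact absurd h (by simp)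
  | cons b N ih =>
    intro h
    cases h with
    | cons _ h => obtain ⟨t₁, t₂, t₃, rfl⟩ := ih h; exact ⟨b :: t₁, t₂, t₃, rfl⟩
    | cons_cons _ h =>
      obtain ⟨s, t, rfl⟩ := List.append_of_mem (show a ∈ N from h.subset (by simp))
      exact ⟨[], s, t, rfl⟩

theorem walk_node_split {x y a : Fin n} :
    ∀ {t r : List (Fin n)} {l : List (Arc n)}, Walk G x l y →
      x :: l.map Arc.tgt = t ++ a :: r →
      ∃ l₁ l₂, l = l₁ ++ l₂ ∧ l₁.length = t.length ∧ Walk G x l₁ a ∧ Walk G a l₂ y ∧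
        l₂.map Arc.tgt = r := by
  intro t
  induction t generalizing x with
  | nil =>
    intro r l hw heq
    simp only [List.nil_append, List.cons.injEq] at heq
    exact ⟨[], l, rfl, rfl, heq.1 ▸ .nil x, heq.1 ▸ hw, heq.2⟩
  | cons b t ih =>
    intro r l hw heq
    simp only [List.cons_append, List.cons.injEq] at heq
    obtain ⟨rfl, heq2⟩ := heq
    cases hw with
    | nil => simp at heq2
    | @cons _ _ e l' hsrc harc hw' =>
      simp only [List.map_cons] at heq2
      obtain ⟨l₁, l₂, rfl, hlen, hw₁, hw₂, hr⟩ := ih hw' heq2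
      exact ⟨e :: l₁, l₂, rfl, by simp [hlen], .cons hsrc harc hw₁, hw₂, hr⟩

theorem walk_extract {x y : Fin n} {l : List (Arc n)} (hw : Walk G x l y)
    (hl : n ≤ l.length) :
    ∃ (l₁ c l₂ : List (Arc n)) (z : Fin n), l = l₁ ++ (c ++ l₂) ∧ Walk G x l₁ z ∧
      Walk G z c z ∧ Walk G z l₂ y ∧ c ≠ [] ∧ c.length ≤ n := by
  set N := x :: l.map Arc.tgt with hN
  have hlen : (n + 1) ≤ N.length := by simp [hN]; omega
  have hnd : ¬ (N.take (n + 1)).Nodup := by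
    intro hnd
    have := hnd.length_le_card
    rw [List.length_take] at this
    simp only [Fintype.card_fin] at this
    omega
  rw [List.nodup_iff_sublist] at hnd
  push_neg at hnd
  obtain ⟨a, ha⟩ := hnd
  replace ha : List.Sublist [a, a] (N.take (n+1)) := ha
  obtain ⟨t₁, t₂, t₃, hsplit⟩ := pair_sublist_split ha
  have hNsplit : N = t₁ ++ a :: (t₂ ++ a :: (t₃ ++ N.drop (n + 1))) := by
    conv_lhs => rw [← List.take_append_drop (n + 1) N]
    rw [hsplit]
    simp
  have htlen : t₁.length + t₂.length + 2 ≤ n + 1 := by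
    have : (N.take (n + 1)).length = n + 1 := by
      rw [List.length_take]; omega
    rw [hsplit] at this
    simp at this
    omega
  obtain ⟨l₁, l₂3, rfl, hlen₁, hw₁, hw₂3, hmap⟩ := walk_node_split hw hNsplit
  have heq2 : a :: l₂3.map Arc.tgt = (a :: t₂) ++ a :: (t₃ ++ N.drop (n + 1)) := by
    rw [hmap]; rfl
  obtain ⟨c, l₂, rfl, hlenc, hwc, hwrest, _⟩ := walk_node_split hw₂3 heq2
  refine ⟨l₁, c, l₂, a, rfl, hw₁, hwc, hwrest, ?_, ?_⟩
  · intro hc; rw [hc] at hlenc; simp at hlenc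
  · rw [hlenc]; simp; omega

/-- Shorten a walk to length `< n`, not decreasing its cost, provided all short
circuits have nonpositive cost. -/
theorem walk_shorten (cost : Arc n → ℚ)
    (hc : ∀ (z : Fin n) (m : List (Arc n)), Walk G z m z → m ≠ [] → m.length ≤ n →
      (m.map cost).sum ≤ 0) {x y : Fin n} {l : List (Arc n)} (hw : Walk G x l y) :
    ∃ l', Walk G x l' y ∧ l'.length < n ∧ (l.map cost).sum ≤ (l'.map cost).sum := by
  obtain ⟨N, hN⟩ : ∃ N, l.length ≤ N := ⟨l.length, le_refl _⟩
  induction N generalizing l with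
  | zero =>
    have : l = [] := List.eq_nil_of_length_eq_zero (Nat.le_zero.mp hN)
    subst this
    exact ⟨[], hw, x.pos, le_refl _⟩
  | succ N ih =>
    by_cases hlen : l.length < n
    · exact ⟨l, hw, hlen, le_refl _⟩
    · obtain ⟨l₁, c, l₂, z, rfl, hw₁, hwc, hw₂, hcne, hclen⟩ :=
        walk_extract hw (le_of_not_gt hlen)
      have hcost : ((l₁ ++ l₂).map cost).sum ≥ ((l₁ ++ (c ++ l₂)).map cost).sum := by
        have := hc z c hwc hcne hclen
        simp only [List.map_append, List.sum_append]
        linarith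
      have hlen' : (l₁ ++ l₂).length ≤ N := by
        have h1 : 1 ≤ c.length := List.length_pos_iff.mpr hcne
        simp only [List.length_append] at hN ⊢
        omega
      obtain ⟨l', hw', hl', hle⟩ := ih (hw₁.append hw₂) hlen'
      exact ⟨l', hw', hl', le_trans hcost hle⟩

/-! ### The reduced arc weight and the potential `phi` -/

noncomputable def hwt (G : StaticGraph n) (e : Arc n) : ℚ :=
  G.w e - lam G e.tgt * (e.shift : ℚ) - (lam G e.tgt - lam G e.src)

section NegHyp

variable (hna : ¬∃ q : SPath G, q.IsCircuit ∧ q.len ≤ n ∧ 0 < q.weight ∧ q.shift = 0)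
variable (hnb : ¬∃ q₁ p' q₂ : SPath G,
          q₁.IsCircuit ∧ q₂.IsCircuit ∧
          p'.first = q₁.last ∧ q₂.first = p'.last ∧
          p'.len < n ∧ q₁.len ≤ n ∧ q₂.len ≤ n ∧
          0 < q₁.shift ∧ q₂.shift < 0 ∧
          0 < -(q₂.shift : ℚ) * q₁.weight + (q₁.shift : ℚ) * q₂.weight)

include hna in
theorem circ_zero {z : Fin n} {m : List (Arc n)} (hw : Walk G z m z)
    (hlen : m.length ≤ n) (hs : ssum m = 0) : wsum G m ≤ 0 := by
  by_contra h
  push_neg at h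
  exact hna ⟨hw.toSPath, hw.toSPath_last.symm, hlen, h, hs⟩

theorem circ_up {z : Fin n} {m : List (Arc n)} (hw : Walk G z m z)
    (hlen : m.length ≤ n) (hs : 0 < ssum m) : wsum G m ≤ lam G z * (ssum m : ℚ) := by
  have hmem : wsum G m / (ssum m : ℚ) ∈ UpSet G z :=
    ⟨z, m, hw, hlen, hs, Reach.refl z, rfl⟩
  have hpos : (0 : ℚ) < (ssum m : ℚ) := by exact_mod_cast hs
  have := le_lam_of_up hmem
  rw [div_le_iff₀ hpos] at this
  linarith

include hnb in
theorem circ_dn {z : Fin n} {m : List (Arc n)} (hw : Walk G z m z)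
    (hlen : m.length ≤ n) (hs : ssum m < 0) : wsum G m ≤ lam G z * (ssum m : ℚ) := by
  have hneg : (ssum m : ℚ) < 0 := by exact_mod_cast hs
  have hle : lam G z ≤ wsum G m / (ssum m : ℚ) := by
    apply lam_le (m0_le ⟨z, m, hw, hlen, hs, rfl⟩)
    rintro c ⟨z₁, l₁, hw₁, hl₁, hs₁, ⟨r, hr⟩, rfl⟩
    obtain ⟨r', hr', hrlen, -⟩ := walk_shorten (fun _ => 0) (by simp) hr
    have hs₁q : (0 : ℚ) < (ssum l₁ : ℚ) := by exact_mod_cast hs₁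
    have happ : ¬ (0 : ℚ) < -(ssum m : ℚ) * wsum G l₁ + (ssum l₁ : ℚ) * wsum G m := by
      intro hcon
      apply hnb
      refine ⟨hw₁.toSPath, hr'.toSPath, hw.toSPath, hw₁.toSPath_last.symm,
        hw.toSPath_last.symm, ?_, ?_, hrlen, hl₁, hlen, hs₁, hs, hcon⟩
      · rw [hw₁.toSPath_last]; rfl
      · rw [hr'.toSPath_last]; rfl
    push_neg at happ
    calc wsum G l₁ / (ssum l₁ : ℚ) ≤ -(wsum G m) / -(ssum m : ℚ) := by
          rw [div_le_div_iff₀ hs₁q (by linarith)]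
          linarith
      _ = wsum G m / (ssum m : ℚ) := by rw [neg_div_neg_eq]
  have := mul_le_mul_of_nonpos_right hle (le_of_lt hneg)
  rw [div_mul_cancel₀ _ (ne_of_lt hneg)] at this
  linarith

include hna hnb in
theorem circ_bound {z : Fin n} {m : List (Arc n)} (hw : Walk G z m z)
    (hlen : m.length ≤ n) : wsum G m ≤ lam G z * (ssum m : ℚ) := by
  rcases lt_trichotomy (ssum m) 0 with h | h | h
  · exact circ_dn hnb hw hlen h
  · rw [h]; simpa using circ_zero hna hw hlen h
  · exact circ_up hw hlen h

theorem telescope_sum (f : Fin n → ℚ) {x y : Fin n} {l : List (Arc n)}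
    (h : Walk G x l y) :
    (l.map (fun e => f e.tgt - f e.src)).sum = f y - f x := by
  induction h with
  | nil => simp
  | cons hsrc harc h ih => subst hsrc; simp [ih]

theorem lam_const_on_circ {z : Fin n} {m : List (Arc n)} (hw : Walk G z m z) :
    ∀ e ∈ m, lam G e.tgt = lam G z := by
  intro e he
  obtain ⟨m₁, m₂, rfl⟩ := List.append_of_mem he
  obtain ⟨w', hw₁, hw₂⟩ := hw.split
  cases hw₂ with
  | cons hsrc harc hw₃ =>
    exact le_antisymm (lam_mono_walk hw₃)
      (lam_mono_walk (hw₁.append (.cons hsrc harc (.nil _))))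

theorem sum_map_hwt (G : StaticGraph n) (l : List (Arc n)) :
    (l.map (hwt G)).sum = wsum G l - (l.map (fun e => lam G e.tgt * (e.shift : ℚ))).sum
      - (l.map (fun e => lam G e.tgt - lam G e.src)).sum := by
  induction l with
  | nil => simp
  | cons e l ih => simp only [List.map_cons, List.sum_cons, ih, wsum_cons, hwt]; ring

theorem sum_shift_const {c : ℚ} {m : List (Arc n)}
    (h : ∀ e ∈ m, lam G e.tgt = c) :
    (m.map (fun e => lam G e.tgt * (e.shift : ℚ))).sum = c * (ssum m : ℚ) := by
  induction m with
  | nil => simp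
  | cons e m ih =>
    rw [List.map_cons, List.sum_cons, h e (by simp),
      ih (fun f hf => h f (by simp [hf])), ssum_cons]
    push_cast
    ring

include hna hnb in
theorem hwt_circ (z : Fin n) (m : List (Arc n)) (hw : Walk G z m z) (_ : m ≠ [])
    (hlen : m.length ≤ n) : (m.map (hwt G)).sum ≤ 0 := by
  rw [sum_map_hwt, sum_shift_const (lam_const_on_circ hw), telescope_sum (lam G) hw]
  have := circ_bound hna hnb hw hlen
  linarith

def PhiSet (G : StaticGraph n) (y : Fin n) : Set ℚ :=
  {c | ∃ x l, Walk G x l y ∧ l.length < n ∧ c = (l.map (hwt G)).sum}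

theorem finite_PhiSet (G : StaticGraph n) (y : Fin n) : (PhiSet G y).Finite := by
  apply Set.Finite.subset ((finite_walkLists G n).image (fun l => (l.map (hwt G)).sum))
  rintro c ⟨x, l, hw, hl, rfl⟩
  exact ⟨l, ⟨hw.valid, le_of_lt hl⟩, rfl⟩

theorem zero_mem_PhiSet (G : StaticGraph n) (y : Fin n) : (0 : ℚ) ∈ PhiSet G y :=
  ⟨y, [], .nil y, y.pos, by simp⟩

noncomputable def phi (G : StaticGraph n) (y : Fin n) : ℚ :=
  ((finite_PhiSet G y).toFinset).max' ⟨0, by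
    rw [Set.Finite.mem_toFinset]; exact zero_mem_PhiSet G y⟩

theorem le_phi {y : Fin n} {c : ℚ} (hc : c ∈ PhiSet G y) : c ≤ phi G y :=
  Finset.le_max' _ c (by rwa [Set.Finite.mem_toFinset])

theorem phi_mem (G : StaticGraph n) (y : Fin n) : phi G y ∈ PhiSet G y := by
  have := Finset.max'_mem ((finite_PhiSet G y).toFinset) ⟨0, by
    rw [Set.Finite.mem_toFinset]; exact zero_mem_PhiSet G y⟩
  rwa [Set.Finite.mem_toFinset] at this

include hna hnb in
theorem phi_arc {e : Arc n} (he : G.IsArc e) :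
    phi G e.src + hwt G e ≤ phi G e.tgt := by
  obtain ⟨x, l, hwlk, hlen, hEq⟩ := phi_mem G e.src
  have hw' : Walk G x (l ++ [e]) e.tgt := hwlk.append (.cons rfl he (.nil _))
  obtain ⟨l'', hw'', hlen'', hle⟩ := walk_shorten (hwt G) (hwt_circ hna hnb) hw'
  have h1 : ((l ++ [e]).map (hwt G)).sum = phi G e.src + hwt G e := by
    simp [hEq]
  have h2 : (l''.map (hwt G)).sum ≤ phi G e.tgt := le_phi ⟨x, l'', hw'', hlen'', rfl⟩
  linarith [hle, h1.symm.le]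

include hna hnb in
theorem main_bound {x y : Fin n} {l : List (Arc n)} {k : ℤ}
    (hwlk : Walk G x l y) (hpos : PosL k l) :
    wsum G l ≤ phi G y - phi G x + lam G y * ((k : ℚ) + (ssum l : ℚ)) - lam G x * (k : ℚ) := by
  induction hwlk generalizing k with
  | nil => simp
  | @cons x' y' e l' hsrc harc h ih =>
    obtain ⟨hk, htail⟩ := (posL_cons k e l').mp hpos
    have hIH := ih htail
    have hphi := phi_arc hna hnb harc
    subst hsrc
    have hmono : lam G e.src ≤ lam G e.tgt := lam_mono_arc harc
    have hk1 : (1 : ℚ) ≤ (k : ℚ) := by exact_mod_cast hk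
    have hprod : 0 ≤ (lam G e.tgt - lam G e.src) * ((k : ℚ) - 1) :=
      mul_nonneg (by linarith) (by linarith)
    rw [hwt] at hphi
    rw [wsum_cons, ssum_cons]
    push_cast at hIH ⊢
    nlinarith [hIH, hphi, hprod]

end NegHyp

/-! ### Denominators -/

noncomputable def denom (G : StaticGraph n) : ℕ :=
  (finite_isArc G).toFinset.prod (fun e => (G.w e).den)

theorem denom_pos (G : StaticGraph n) : 0 < denom G :=
  Finset.prod_pos (fun e _ => (G.w e).pos)

theorem mul_den_int (q : ℚ) (D : ℕ) (h : q.den ∣ D) : ∃ z : ℤ, q * (D : ℚ) = (z : ℚ) := by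
  obtain ⟨m, hm⟩ := h
  refine ⟨q.num * m, ?_⟩
  have hden : ((q.den : ℚ)) ≠ 0 := by exact_mod_cast q.den_ne_zero
  have hq : q * (q.den : ℚ) = (q.num : ℚ) := by
    nth_rewrite 1 [← Rat.num_div_den q]
    exact div_mul_cancel₀ _ hden
  rw [hm]
  push_cast
  rw [← hq]
  ring

theorem wsum_mul_denom {l : List (Arc n)} (hv : ∀ e ∈ l, G.IsArc e) :
    ∃ z : ℤ, wsum G l * (denom G : ℚ) = (z : ℚ) := by
  induction l with
  | nil => exact ⟨0, by simp⟩
  | cons e l ih =>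
    obtain ⟨z₁, hz₁⟩ := mul_den_int (G.w e) (denom G)
      (Finset.dvd_prod_of_mem _ (by
        rw [Set.Finite.mem_toFinset]
        exact hv e (List.mem_cons_self)))
    obtain ⟨z₂, hz₂⟩ := ih (fun f hf => hv f (List.mem_cons_of_mem _ hf))
    refine ⟨z₁ + z₂, ?_⟩
    rw [wsum_cons, add_mul, hz₁, hz₂]
    push_cast
    ring

/-! ### The hard direction -/

theorem hard_dir (G : StaticGraph n)
    (hna : ¬∃ q : SPath G, q.IsCircuit ∧ q.len ≤ n ∧ 0 < q.weight ∧ q.shift = 0)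
    (hnb : ¬∃ q₁ p' q₂ : SPath G,
          q₁.IsCircuit ∧ q₂.IsCircuit ∧
          p'.first = q₁.last ∧ q₂.first = p'.last ∧
          p'.len < n ∧ q₁.len ≤ n ∧ q₂.len ≤ n ∧
          0 < q₁.shift ∧ q₂.shift < 0 ∧
          0 < -(q₂.shift : ℚ) * q₁.weight + (q₁.shift : ℚ) * q₂.weight) :
    ¬ HasInfWeightPath G Spos := by
  rintro ⟨u, v, p, k, hS, hE, hM⟩
  set C : ℚ := phi G v.1 - phi G u.1 + lam G v.1 * (v.2 : ℚ) - lam G u.1 * (u.2 : ℚ) with hC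
  have hbound : ∀ h, (p h).weight ≤ C := by
    intro h
    have h1 : ((p h).first, k h) = u := (hE h).1
    have h2 : ((p h).last, k h + (p h).shift) = v := (hE h).2
    rw [Prod.mk.injEq] at h1 h2
    obtain ⟨h1c, h1k⟩ := h1
    obtain ⟨h2c, h2k⟩ := h2
    have hb := main_bound hna hnb (p h).walk ((shiftsIn_iff (p h) (k h)).mp (hS h))
    rw [SPath.weight_eq]
    have hx : (k h : ℚ) + (ssum (p h).arcs : ℚ) = (v.2 : ℚ) := by
      rw [← SPath.shift_eq]
      exact_mod_cast congrArg (Int.cast : ℤ → ℚ) h2k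
    rw [hx, h1c, h2c, h1k] at hb
    rw [hC]
    exact hb
  have hz : ∀ h, ∃ z : ℤ, (p h).weight * (denom G : ℚ) = (z : ℚ) := by
    intro h
    rw [SPath.weight_eq]
    exact wsum_mul_denom (p h).valid
  choose z hzeq using hz
  have hDpos : (0 : ℚ) < (denom G : ℚ) := by exact_mod_cast denom_pos G
  have hzmono : ∀ h, z h < z (h + 1) := by
    intro h
    have := mul_lt_mul_of_pos_right (hM h) hDpos
    rw [hzeq h, hzeq (h + 1)] at this
    exact_mod_cast this
  have hzgrow : ∀ h : ℕ, z 0 + h ≤ z h := by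
    intro h
    induction h with
    | zero => simp
    | succ h ih =>
      have := hzmono h
      push_cast
      omega
  have hzbound : ∀ h, (z h : ℚ) ≤ C * (denom G : ℚ) := by
    intro h
    rw [← hzeq h]
    exact mul_le_mul_of_nonneg_right (hbound h) (le_of_lt hDpos)
  obtain ⟨h, hh⟩ := exists_nat_gt (C * (denom G : ℚ) - (z 0 : ℚ))
  have h1 := hzbound h
  have h2 : ((z 0 + h : ℤ) : ℚ) ≤ (z h : ℚ) := by exact_mod_cast hzgrow h
  push_cast at h2
  linarith

/-! ### The easy direction: case (a) -/

theorem easy_a (G : StaticGraph n) (q : SPath G) (hc : q.IsCircuit)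
    (hw : 0 < q.weight) (hs : q.shift = 0) : HasInfWeightPath G Spos := by
  set k : ℤ := 1 - lmin q.arcs with hk
  have hs' : ssum q.arcs = 0 := hs
  set P : ℕ → SPath G := fun h => SPath.npow q hc (h + 1) with hPdef
  refine ⟨(q.first, k), (q.first, k), P, fun _ => k, ?_, ?_, ?_⟩
  · intro h
    show (SPath.npow q hc (h + 1)).shiftsIn k Spos
    rw [shiftsIn_iff, posL_iff]
    have := lmin_npow_of_nonneg q hc (le_of_eq hs'.symm) (h + 1)
    omega
  · intro h
    show ((SPath.npow q hc (h + 1)).first, k) = (q.first, k) ∧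
      ((SPath.npow q hc (h + 1)).last, k + (SPath.npow q hc (h + 1)).shift) = (q.first, k)
    constructor
    · rw [SPath.npow_first]
    · rw [SPath.npow_last]
      have : (SPath.npow q hc (h + 1)).shift = 0 := by
        rw [SPath.shift_eq, npow_ssum, hs', mul_zero]
      rw [this, add_zero]
  · intro h
    show (SPath.npow q hc (h + 1)).weight < (SPath.npow q hc (h + 1 + 1)).weight
    rw [SPath.weight_eq, SPath.weight_eq, npow_wsum, npow_wsum, ← SPath.weight_eq]
    have hlt : ((h + 1 : ℕ) : ℚ) < ((h + 1 + 1 : ℕ) : ℚ) := by exact_mod_cast Nat.lt_succ_self _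
    exact mul_lt_mul_of_pos_right hlt hw

/-! ### The easy direction: case (b) -/

theorem easy_b (G : StaticGraph n) (q₁ p' q₂ : SPath G)
    (hc₁ : q₁.IsCircuit) (hc₂ : q₂.IsCircuit)
    (h₁ : p'.first = q₁.last) (h₂ : q₂.first = p'.last)
    (hs₁ : 0 < q₁.shift) (hs₂ : q₂.shift < 0)
    (hkey : 0 < -(q₂.shift : ℚ) * q₁.weight + (q₁.shift : ℚ) * q₂.weight) :
    HasInfWeightPath G Spos := by
  set P : ℕ → SPath G := fun h => rpath q₁ p' q₂ hc₁ hc₂ h₁ h₂ h with hP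
  have harcs : ∀ h, (P h).arcs =
      (SPath.npow q₁ hc₁ ((-q₂.shift).toNat * h)).arcs ++
        (p'.arcs ++ (SPath.npow q₂ hc₂ (q₁.shift.toNat * h)).arcs) := fun _ => rfl
  have hta : (((-q₂.shift).toNat : ℤ)) = -q₂.shift := Int.toNat_of_nonneg (by omega)
  have htb : ((q₁.shift.toNat : ℤ)) = q₁.shift := Int.toNat_of_nonneg (by omega)
  have hs₁' : ssum q₁.arcs = q₁.shift := rfl
  have hs₂' : ssum q₂.arcs = q₂.shift := rfl
  have hcancel : ∀ h : ℕ, (((-q₂.shift).toNat * h : ℕ) : ℤ) * ssum q₁.arcs +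
      ((q₁.shift.toNat * h : ℕ) : ℤ) * ssum q₂.arcs = 0 := by
    intro h
    rw [hs₁', hs₂']
    push_cast [hta, htb]
    ring
  have hssum : ∀ h, ssum (P h).arcs = ssum p'.arcs := by
    intro h
    rw [harcs, ssum_append, ssum_append, npow_ssum, npow_ssum]
    have := hcancel h
    omega
  have hshift : ∀ h, (P h).shift = p'.shift := fun h => hssum h
  have hfirst : ∀ h, (P h).first = q₁.first := by
    intro h
    show (SPath.npow q₁ hc₁ _).first = q₁.first
    exact SPath.npow_first _ _ _
  have hlast : ∀ h, (P h).last = q₂.first := by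
    intro h
    show ((SPath.npow q₁ hc₁ _).append _ _).last = q₂.first
    exact (SPath.last_append _ _ _).trans ((SPath.last_append _ _ _).trans (SPath.npow_last _ _ _))
  have hweight : ∀ h, (P h).weight = p'.weight +
      (h : ℚ) * (-(q₂.shift : ℚ) * q₁.weight + (q₁.shift : ℚ) * q₂.weight) := by
    intro h
    rw [SPath.weight_eq, harcs, wsum_append, wsum_append, npow_wsum, npow_wsum,
      ← SPath.weight_eq, ← SPath.weight_eq, ← SPath.weight_eq]
    have hta' : (((-q₂.shift).toNat : ℕ) : ℚ) = -(q₂.shift : ℚ) := by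
      exact_mod_cast hta
    have htb' : ((q₁.shift.toNat : ℕ) : ℚ) = (q₁.shift : ℚ) := by
      exact_mod_cast htb
    have ha : (((-q₂.shift).toNat * h : ℕ) : ℚ) = -(q₂.shift : ℚ) * (h : ℚ) := by
      push_cast [hta']
      ring
    have hb : ((q₁.shift.toNat * h : ℕ) : ℚ) = (q₁.shift : ℚ) * (h : ℚ) := by
      push_cast [htb']
      ring
    rw [ha, hb]
    ring
  set k : ℤ := 1 - min (lmin q₁.arcs) (min (lmin p'.arcs) (ssum p'.arcs + lmin q₂.arcs))
    with hkdef
  refine ⟨(q₁.first, k), (q₂.first, k + p'.shift), P, fun _ => k, ?_, ?_, ?_⟩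
  · intro h
    show (P h).shiftsIn k Spos
    rw [shiftsIn_iff, posL_iff, harcs, lmin_append, lmin_append]
    have e₁ : lmin q₁.arcs ≤ lmin (SPath.npow q₁ hc₁ ((-q₂.shift).toNat * h)).arcs :=
      lmin_npow_of_nonneg q₁ hc₁ (by omega) _
    have e₂ : (((q₁.shift.toNat * h : ℕ)) : ℤ) * ssum q₂.arcs + lmin q₂.arcs ≤
        lmin (SPath.npow q₂ hc₂ (q₁.shift.toNat * h)).arcs :=
      lmin_npow_of_nonpos q₂ hc₂ (by omega) _
    have e₃ : ssum (SPath.npow q₁ hc₁ ((-q₂.shift).toNat * h)).arcs =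
        (((-q₂.shift).toNat * h : ℕ) : ℤ) * ssum q₁.arcs := npow_ssum _ _ _
    have e₄ : 0 ≤ (((-q₂.shift).toNat * h : ℕ) : ℤ) * ssum q₁.arcs :=
      mul_nonneg (Int.natCast_nonneg _) (by omega)
    have e₅ := hcancel h
    omega
  · intro h
    show ((P h).first, k) = (q₁.first, k) ∧
      ((P h).last, k + (P h).shift) = (q₂.first, k + p'.shift)
    exact ⟨by rw [hfirst], by rw [hlast, hshift]⟩
  · intro h
    rw [hweight, hweight]
    push_cast
    nlinarith [hkey]

end Periodic


theorem stmt0 {n : ℕ} (G : StaticGraph n) :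
    HasInfWeightPath G Spos ↔
      ((∃ q : SPath G, q.IsCircuit ∧ q.len ≤ n ∧ 0 < q.weight ∧ q.shift = 0) ∨
       (∃ q₁ p' q₂ : SPath G,
          q₁.IsCircuit ∧ q₂.IsCircuit ∧
          p'.first = q₁.last ∧ q₂.first = p'.last ∧
          p'.len < n ∧ q₁.len ≤ n ∧ q₂.len ≤ n ∧
          0 < q₁.shift ∧ q₂.shift < 0 ∧
          0 < -(q₂.shift : ℚ) * q₁.weight + (q₁.shift : ℚ) * q₂.weight)) := by
  constructor
  · intro hinf
    by_contra hRHS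
    rw [not_or] at hRHS
    exact hard_dir G hRHS.1 hRHS.2 hinf
  · rintro (⟨q, hc, -, hw, hs⟩ | ⟨q₁, p', q₂, hc₁, hc₂, h₁, h₂, -, -, -, hs₁, hs₂, hkey⟩)
    · exact easy_a G q hc hw hs
    · exact easy_b G q₁ p' q₂ hc₁ hc₂ h₁ h₂ hs₁ hs₂ hkey
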